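/- arXiv:2302.08731 — 6 statements merged into one kernel-verified Lean document; each statement's English description precedes it below -/
import Mathlib

section
/- Assume k₁ < 2αB. Then for every y > 0 and every x ≥ -B one has f(x) - yx ≤ f(x*(y)) - y·x*(y), where x*(y) = y^{-1/γ} if 0 < y ≤ k₁, x*(y) = -y/(2α) if k₁ < y ≤ 2αB, and x*(y) = -B if y > 2αB. Moreover, at y = k₁ the point -k₁/(2α) is also a maximizer: f(x) - k₁x ≤ f(-k₁/(2α)) + k₁²/(2α) for all x ≥ -B. -/
open Real

/-- The non-concave objective `f(x) = -αx²` for `x < 0`, `x^{1-γ}/(1-γ)` for `x > 0`,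
and `f(0) = 0` (note `0 ^ (1-γ) = 0` for the real power since `1 - γ > 0`). -/
noncomputable def f (γ α x : ℝ) : ℝ :=
  if x < 0 then -α * x ^ 2 else x ^ (1 - γ) / (1 - γ)

/-- The threshold `k₁ = (4αγ/(1-γ))^{γ/(1+γ)}`. -/
noncomputable def k₁ (γ α : ℝ) : ℝ := (4 * α * γ / (1 - γ)) ^ (γ / (1 + γ))

/-- The pointwise maximizer in the low-tolerance case `k₁ < 2αB`:
`x*(y) = y^{-1/γ}` for `0 < y ≤ k₁`, `x*(y) = -y/(2α)` for `k₁ < y ≤ 2αB`,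
and `x*(y) = -B` for `y > 2αB`. -/
noncomputable def xstar (γ α B y : ℝ) : ℝ :=
  if y ≤ k₁ γ α then y ^ (-(1 / γ))
  else if y ≤ 2 * α * B then -y / (2 * α)
  else -B

section Aux

variable {γ α : ℝ}

/-- Young-type inequality bounding the positive branch. -/
lemma young_aux (hγ0 : 0 < γ) (hγ1 : γ < 1) {y t : ℝ} (hy : 0 < y) (ht : 0 ≤ t) :
    t ^ (1 - γ) / (1 - γ) - y * t ≤ γ / (1 - γ) * y ^ (-((1 - γ) / γ)) := by
  have h1γ : 0 < 1 - γ := by linarith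
  have hpq : (1 / (1 - γ)).HolderConjugate (1 / γ) := by
    rw [Real.holderConjugate_iff]
    constructor
    · rw [lt_div_iff₀ h1γ]; linarith
    · rw [one_div, one_div, inv_inv, inv_inv]; ring
  have hY := Real.young_inequality_of_nonneg (a := (t * y) ^ (1 - γ))
    (b := y ^ (-(1 - γ))) (rpow_nonneg (by positivity) _) (rpow_nonneg hy.le _) hpq
  have e1 : ((t * y) ^ (1 - γ)) ^ (1 / (1 - γ)) = t * y := by
    rw [← rpow_mul (by positivity), mul_one_div, div_self h1γ.ne', rpow_one]
  have e2 : (y ^ (-(1 - γ))) ^ (1 / γ) = y ^ (-((1 - γ) / γ)) := by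
    rw [← rpow_mul hy.le]; congr 1; ring
  have e3 : (t * y) ^ (1 - γ) * y ^ (-(1 - γ)) = t ^ (1 - γ) := by
    rw [mul_rpow ht hy.le, mul_assoc, ← rpow_add hy, add_neg_cancel, rpow_zero, mul_one]
  rw [e1, e2, e3, one_div (1 - γ), one_div γ, div_eq_mul_inv, div_eq_mul_inv, inv_inv, inv_inv] at hY
  have hfin : γ / (1 - γ) * y ^ (-((1 - γ) / γ)) * (1 - γ) = γ * y ^ (-((1 - γ) / γ)) := by
    field_simp
  rw [sub_le_iff_le_add, div_le_iff₀ h1γ]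
  nlinarith [hY]

lemma Cpos (hγ0 : 0 < γ) (hγ1 : γ < 1) (hα : 0 < α) : 0 < 4 * α * γ / (1 - γ) := by
  have h1γ : 0 < 1 - γ := by linarith
  positivity

lemma k1_pos (hγ0 : 0 < γ) (hγ1 : γ < 1) (hα : 0 < α) : 0 < k₁ γ α :=
  rpow_pos_of_pos (Cpos hγ0 hγ1 hα) _

lemma k1_pow (hγ0 : 0 < γ) (hγ1 : γ < 1) (hα : 0 < α) :
    (k₁ γ α) ^ ((1 + γ) / γ) = 4 * α * γ / (1 - γ) := by
  rw [k₁, ← rpow_mul (Cpos hγ0 hγ1 hα).le,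
    show γ / (1 + γ) * ((1 + γ) / γ) = 1 by field_simp, rpow_one]

lemma y_pow_split (hγ0 : 0 < γ) {y : ℝ} (hy : 0 < y) :
    y ^ ((1 + γ) / γ) = y ^ 2 * y ^ ((1 - γ) / γ) := by
  rw [show (y : ℝ) ^ 2 = y ^ (2 : ℝ) by rw [rpow_two], ← rpow_add hy]
  congr 1; field_simp; ring

/-- For `y ≥ k₁`, the positive-branch value is below the negative-branch value. -/
lemma comp_le (hγ0 : 0 < γ) (hγ1 : γ < 1) (hα : 0 < α) {y : ℝ} (hy : 0 < y)
    (h : k₁ γ α ≤ y) :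
    γ / (1 - γ) * y ^ (-((1 - γ) / γ)) ≤ y ^ 2 / (4 * α) := by
  have h1γ : 0 < 1 - γ := by linarith
  have hp : (0 : ℝ) ≤ (1 + γ) / γ := by positivity
  have h1 : 4 * α * γ / (1 - γ) ≤ y ^ 2 * y ^ ((1 - γ) / γ) := by
    rw [← y_pow_split hγ0 hy, ← k1_pow hγ0 hγ1 hα]
    exact rpow_le_rpow (k1_pos hγ0 hγ1 hα).le h hp
  have hu : 0 < y ^ ((1 - γ) / γ) := rpow_pos_of_pos hy _
  rw [rpow_neg hy.le, inv_eq_one_div, mul_one_div, div_le_div_iff₀ hu (by positivity)]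
  have he : γ / (1 - γ) * (4 * α) = 4 * α * γ / (1 - γ) := by ring
  linarith

/-- For `y ≤ k₁`, the negative-branch value is below the positive-branch value. -/
lemma comp_ge (hγ0 : 0 < γ) (hγ1 : γ < 1) (hα : 0 < α) {y : ℝ} (hy : 0 < y)
    (h : y ≤ k₁ γ α) :
    y ^ 2 / (4 * α) ≤ γ / (1 - γ) * y ^ (-((1 - γ) / γ)) := by
  have h1γ : 0 < 1 - γ := by linarith
  have hp : (0 : ℝ) ≤ (1 + γ) / γ := by positivity
  have h1 : y ^ 2 * y ^ ((1 - γ) / γ) ≤ 4 * α * γ / (1 - γ) := by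
    rw [← y_pow_split hγ0 hy, ← k1_pow hγ0 hγ1 hα]
    exact rpow_le_rpow hy.le h hp
  have hu : 0 < y ^ ((1 - γ) / γ) := rpow_pos_of_pos hy _
  rw [rpow_neg hy.le, inv_eq_one_div, mul_one_div, div_le_div_iff₀ (by positivity) hu]
  have he : γ / (1 - γ) * (4 * α) = 4 * α * γ / (1 - γ) := by ring
  linarith

lemma quad_bound {α : ℝ} (hα : 0 < α) (y x : ℝ) :
    -α * x ^ 2 - y * x ≤ y ^ 2 / (4 * α) := by
  rw [le_div_iff₀ (by positivity : (0:ℝ) < 4 * α)]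
  nlinarith [sq_nonneg (2 * α * x + y)]

/-- Value of `f(x) - yx` at `x = y^{-1/γ}`. -/
lemma val_pos (hγ0 : 0 < γ) (hγ1 : γ < 1) {α y : ℝ} (hy : 0 < y) :
    f γ α (y ^ (-(1 / γ))) - y * y ^ (-(1 / γ)) = γ / (1 - γ) * y ^ (-((1 - γ) / γ)) := by
  have h1γ : 0 < 1 - γ := by linarith
  have hA : 0 < y ^ (-(1 / γ)) := rpow_pos_of_pos hy _
  rw [f, if_neg (not_lt.2 hA.le)]
  have e1 : (y ^ (-(1 / γ))) ^ (1 - γ) = y ^ (-((1 - γ) / γ)) := by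
    rw [← rpow_mul hy.le]; congr 1; ring
  have e2 : y * y ^ (-(1 / γ)) = y ^ (-((1 - γ) / γ)) := by
    nth_rewrite 1 [← rpow_one y]
    rw [← rpow_add hy]; congr 1; field_simp; ring
  rw [e1, e2]; field_simp; ring

end Aux

theorem stmt0 (γ α B : ℝ) (hγ0 : 0 < γ) (hγ1 : γ < 1) (hα : 0 < α) (hB : 0 < B)
    (hk : k₁ γ α < 2 * α * B) :
    (∀ y : ℝ, 0 < y → ∀ x : ℝ, -B ≤ x →
      f γ α x - y * x ≤ f γ α (xstar γ α B y) - y * xstar γ α B y) ∧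
    (∀ x : ℝ, -B ≤ x →
      f γ α x - k₁ γ α * x ≤ f γ α (-(k₁ γ α / (2 * α))) + (k₁ γ α) ^ 2 / (2 * α)) := by
  have h1γ : 0 < 1 - γ := by linarith
  constructor
  · intro y hy x hx
    by_cases h1 : y ≤ k₁ γ α
    · rw [xstar, if_pos h1, val_pos hγ0 hγ1 hy]
      rcases lt_or_ge x 0 with hx0 | hx0
      · rw [f, if_pos hx0]
        have hc := comp_ge hγ0 hγ1 hα hy h1
        have hq := quad_bound hα y x
        linarith
      · rw [f, if_neg (not_lt.2 hx0)]
        exact young_aux hγ0 hγ1 hy hx0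
    · push_neg at h1
      rw [xstar, if_neg (not_le.2 h1)]
      by_cases h2 : y ≤ 2 * α * B
      · rw [if_pos h2]
        have hneg : -y / (2 * α) < 0 := by
          apply div_neg_of_neg_of_pos (by linarith) (by positivity)
        have hfval : f γ α (-y / (2 * α)) - y * (-y / (2 * α)) = y ^ 2 / (4 * α) := by
          rw [f, if_pos hneg]; field_simp; ring
        rw [hfval]
        rcases lt_or_ge x 0 with hx0 | hx0
        · rw [f, if_pos hx0]
          exact quad_bound hα y x
        · rw [f, if_neg (not_lt.2 hx0)]
          have h3 := young_aux hγ0 hγ1 hy hx0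
          have h4 := comp_le hγ0 hγ1 hα hy h1.le
          linarith
      · push_neg at h2
        rw [if_neg (not_le.2 h2)]
        have hfB : f γ α (-B) - y * (-B) = -α * B ^ 2 + y * B := by
          rw [f, if_pos (by linarith : -B < 0)]; ring
        rw [hfB]
        rcases lt_or_ge x 0 with hx0 | hx0
        · rw [f, if_pos hx0]
          have hprod : 0 ≤ (x + B) * (y - α * (B - x)) := by
            apply mul_nonneg (by linarith)
            nlinarith
          nlinarith [hprod]
        · rw [f, if_neg (not_lt.2 hx0)]
          have hy2 : (0 : ℝ) < 2 * α * B := by positivity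
          have h3 := young_aux hγ0 hγ1 hy hx0
          have h4 : y ^ (-((1 - γ) / γ)) ≤ (2 * α * B) ^ (-((1 - γ) / γ)) :=
            rpow_le_rpow_of_nonpos hy2 h2.le (by
              rw [neg_nonpos]; positivity)
          have h5 := comp_le hγ0 hγ1 hα hy2 hk.le
          have h6 : γ / (1 - γ) * y ^ (-((1 - γ) / γ)) ≤
              γ / (1 - γ) * (2 * α * B) ^ (-((1 - γ) / γ)) :=
            mul_le_mul_of_nonneg_left h4 (by positivity)
          have h7 : (2 * α * B) ^ 2 / (4 * α) = α * B ^ 2 := by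
            field_simp; ring
          nlinarith
  · intro x hx
    have hk1 : 0 < k₁ γ α := k1_pos hγ0 hγ1 hα
    have hneg : -(k₁ γ α / (2 * α)) < 0 := by
      rw [neg_neg_iff_pos]; positivity
    have hval : f γ α (-(k₁ γ α / (2 * α))) + (k₁ γ α) ^ 2 / (2 * α)
        = (k₁ γ α) ^ 2 / (4 * α) := by
      rw [f, if_pos hneg]; field_simp; ring
    rw [hval]
    rcases lt_or_ge x 0 with hx0 | hx0
    · rw [f, if_pos hx0]
      exact quad_bound hα (k₁ γ α) x
    · rw [f, if_neg (not_lt.2 hx0)]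
      have h3 := young_aux hγ0 hγ1 hk1 hx0
      have h4 := comp_le hγ0 hγ1 hα hk1 le_rfl
      linarith
end

section
/- Assume k₁ ≥ 2αB. Then for every y > 0 and every x ≥ -B one has f(x) - yx ≤ f(x*(y)) - y·x*(y), where x*(y) = y^{-1/γ} if 0 < y ≤ k₂ and x*(y) = -B if y > k₂. Moreover, at y = k₂ the point -B is also a maximizer: f(x) - k₂x ≤ f(-B) + k₂B for all x ≥ -B. -/
open Real

/-- The pointwise maximizer in the high-tolerance case `k₁ ≥ 2αB`:
`x*(y) = y^{-1/γ}` for `0 < y ≤ k₂` and `x*(y) = -B` for `y > k₂`. -/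
noncomputable def xstar2 (γ k₂ B y : ℝ) : ℝ :=
  if y ≤ k₂ then y ^ (-(1 / γ)) else -B

/-- Positive branch: Fenchel bound via weighted AM-GM. -/
lemma posbranch {γ x y : ℝ} (hγ0 : 0 < γ) (hγ1 : γ < 1) (hx : 0 ≤ x) (hy : 0 < y) :
    x ^ (1 - γ) / (1 - γ) - y * x ≤ γ / (1 - γ) * y ^ ((γ - 1) / γ) := by
  have h1γ : (0:ℝ) < 1 - γ := by linarith
  have hq : ((γ - 1) / γ) * γ = γ - 1 := by field_simp
  have key : x ^ (1 - γ) ≤ (1 - γ) * (x * y) + γ * y ^ ((γ - 1) / γ) := by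
    have hgm := Real.geom_mean_le_arith_mean2_weighted (by linarith : (0:ℝ) ≤ 1 - γ) hγ0.le
      (mul_nonneg hx hy.le) (Real.rpow_nonneg hy.le ((γ - 1) / γ)) (by ring)
    calc x ^ (1 - γ) = x ^ (1 - γ) * (y ^ (1 - γ) * y ^ (γ - 1)) := by
          rw [← Real.rpow_add hy]
          norm_num
      _ = (x * y) ^ (1 - γ) * (y ^ ((γ - 1) / γ)) ^ γ := by
          rw [Real.mul_rpow hx hy.le, ← Real.rpow_mul hy.le, hq]
          ring
      _ ≤ (1 - γ) * (x * y) + γ * y ^ ((γ - 1) / γ) := hgm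
  have hdiv : x ^ (1 - γ) / (1 - γ) ≤ x * y + γ / (1 - γ) * y ^ ((γ - 1) / γ) := by
    rw [div_le_iff₀ h1γ]
    have : (x * y + γ / (1 - γ) * y ^ ((γ - 1) / γ)) * (1 - γ)
        = (1 - γ) * (x * y) + γ * y ^ ((γ - 1) / γ) := by
      field_simp
    linarith [key, this.ge]
  linarith

/-- Value at the positive-branch maximizer. -/
lemma Pval {γ α y : ℝ} (hγ0 : 0 < γ) (hγ1 : γ < 1) (hy : 0 < y) :
    f γ α (y ^ (-(1 / γ))) - y * y ^ (-(1 / γ)) = γ / (1 - γ) * y ^ ((γ - 1) / γ) := by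
  have h1γ : (0:ℝ) < 1 - γ := by linarith
  have hxp : (0:ℝ) < y ^ (-(1 / γ)) := Real.rpow_pos_of_pos hy _
  rw [f, if_neg (not_lt.2 hxp.le)]
  have e1 : (y ^ (-(1 / γ))) ^ (1 - γ) = y ^ ((γ - 1) / γ) := by
    rw [← Real.rpow_mul hy.le]
    congr 1
    field_simp
    ring
  have e2 : y * y ^ (-(1 / γ)) = y ^ ((γ - 1) / γ) := by
    nth_rewrite 1 [← Real.rpow_one y]
    rw [← Real.rpow_add hy]
    congr 1
    field_simp
    ring
  rw [e1, e2]
  field_simp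
  ring

/-- For `y ≤ k₁`, the interior negative-branch value is below the positive branch. -/
lemma L1 {γ α y : ℝ} (hγ0 : 0 < γ) (hγ1 : γ < 1) (hα : 0 < α)
    (hy : 0 < y) (hyk : y ≤ k₁ γ α) :
    y ^ 2 / (4 * α) ≤ γ / (1 - γ) * y ^ ((γ - 1) / γ) := by
  have h1γ : (0:ℝ) < 1 - γ := by linarith
  have hc : (0:ℝ) < 4 * α * γ / (1 - γ) := by positivity
  have hexp : (γ / (1 + γ)) * ((1 + γ) / γ) = 1 := by
    field_simp
  have hk1 : (k₁ γ α) ^ ((1 + γ) / γ) = 4 * α * γ / (1 - γ) := by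
    rw [k₁, ← Real.rpow_mul hc.le, hexp, Real.rpow_one]
  have hmon : y ^ ((1 + γ) / γ) ≤ 4 * α * γ / (1 - γ) := by
    rw [← hk1]
    exact Real.rpow_le_rpow hy.le hyk (by positivity)
  have hsplit : y ^ (2:ℝ) = y ^ ((1 + γ) / γ) * y ^ ((γ - 1) / γ) := by
    rw [← Real.rpow_add hy]
    congr 1
    field_simp
    ring
  have hyq : (0:ℝ) ≤ y ^ ((γ - 1) / γ) := Real.rpow_nonneg hy.le _
  have h2 : y ^ 2 ≤ (4 * α * γ / (1 - γ)) * y ^ ((γ - 1) / γ) := by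
    have : y ^ (2:ℝ) = y ^ 2 := by
      rw [show (2:ℝ) = ((2:ℕ):ℝ) by norm_num, Real.rpow_natCast]
    rw [← this, hsplit]
    exact mul_le_mul_of_nonneg_right hmon hyq
  rw [div_le_iff₀ (by positivity : (0:ℝ) < 4 * α)]
  have : γ / (1 - γ) * y ^ ((γ - 1) / γ) * (4 * α) = (4 * α * γ / (1 - γ)) * y ^ ((γ - 1) / γ) := by
    ring
  linarith [h2, this.ge]

/-- Quadratic bound on `[-B, ∞)` when `y ≥ 2αB`. -/
lemma quad2 {α B x y : ℝ} (hα : 0 < α) (hx : -B ≤ x) (hy : 2 * α * B ≤ y) :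
    -α * x ^ 2 - y * x ≤ y * B - α * B ^ 2 := by
  have h1 : (0:ℝ) ≤ B + x := by linarith
  have h2 : (0:ℝ) ≤ y - α * (B - x) := by nlinarith
  nlinarith [mul_nonneg h1 h2]

/-- Unconstrained quadratic bound. -/
lemma quad1 {α x y : ℝ} (hα : 0 < α) : -α * x ^ 2 - y * x ≤ y ^ 2 / (4 * α) := by
  rw [le_div_iff₀ (by positivity : (0:ℝ) < 4 * α)]
  nlinarith [sq_nonneg (2 * α * x + y)]

/-- Strict antitonicity of `y ↦ γ/(1-γ)·y^((γ-1)/γ) - y·B` on `(0,∞)`. -/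
lemma hfun_anti {γ B : ℝ} (hγ0 : 0 < γ) (hγ1 : γ < 1) (hB : 0 < B) :
    StrictAntiOn (fun y : ℝ => γ / (1 - γ) * y ^ ((γ - 1) / γ) - y * B) (Set.Ioi 0) := by
  have hd : ∀ z ∈ Set.Ioi (0:ℝ),
      HasDerivAt (fun y : ℝ => γ / (1 - γ) * y ^ ((γ - 1) / γ) - y * B)
        (-(z ^ (-(1 / γ))) - B) z := by
    intro z hz
    have hz0 : z ≠ 0 := ne_of_gt hz
    have h1 : HasDerivAt (fun y : ℝ => γ / (1 - γ) * y ^ ((γ - 1) / γ))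
        (γ / (1 - γ) * ((γ - 1) / γ * z ^ ((γ - 1) / γ - 1))) z :=
      (Real.hasDerivAt_rpow_const (Or.inl hz0)).const_mul _
    have h2 : HasDerivAt (fun y : ℝ => y * B) B z := by
      simpa using (hasDerivAt_id z).mul_const B
    have := h1.sub h2
    convert this using 1
    · rfl
    · rfl
    · rfl
    have hexp : (γ - 1) / γ - 1 = -(1 / γ) := by
      field_simp
      ring
    rw [hexp]
    have h1γ : (1:ℝ) - γ ≠ 0 := by linarith
    field_simp
    ring
  apply strictAntiOn_of_deriv_neg (convex_Ioi 0)
  · exact fun z hz => ((hd z hz).continuousAt).continuousWithinAt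
  · intro z hz
    rw [interior_Ioi] at hz
    rw [(hd z hz).deriv]
    have := Real.rpow_pos_of_pos hz (-(1 / γ))
    linarith

/-- Value of `hfun` at `k₂ = z₀^{-γ}`. -/
lemma hfun_k2 {γ α B z₀ : ℝ} (hγ0 : 0 < γ) (hγ1 : γ < 1) (hz₀ : 0 < z₀)
    (hz₀eq : z₀ ^ (1 - γ) / (1 - γ) + α * B ^ 2 = z₀ ^ (-γ) * (z₀ + B)) :
    γ / (1 - γ) * (z₀ ^ (-γ)) ^ ((γ - 1) / γ) - z₀ ^ (-γ) * B = -(α * B ^ 2) := by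
  have h1γ : (0:ℝ) < 1 - γ := by linarith
  have e1 : (z₀ ^ (-γ)) ^ ((γ - 1) / γ) = z₀ ^ (1 - γ) := by
    rw [← Real.rpow_mul hz₀.le]
    congr 1
    field_simp
    ring
  have e2 : z₀ ^ (-γ) * z₀ = z₀ ^ (1 - γ) := by
    rw [show (1 - γ) = -γ + 1 by ring, Real.rpow_add hz₀, Real.rpow_one]
  have e3 : γ / (1 - γ) * z₀ ^ (1 - γ) = z₀ ^ (1 - γ) / (1 - γ) - z₀ ^ (1 - γ) := by
    field_simp
    ring
  have e4 : z₀ ^ (-γ) * (z₀ + B) = z₀ ^ (1 - γ) + z₀ ^ (-γ) * B := by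
    rw [mul_add, e2]
  rw [e1, e3]
  linarith [hz₀eq, e4.ge, e4.le]

theorem stmt1 (γ α B z₀ : ℝ) (hγ0 : 0 < γ) (hγ1 : γ < 1) (hα : 0 < α) (hB : 0 < B)
    (hk : 2 * α * B ≤ k₁ γ α) (hz₀ : 0 < z₀)
    (hz₀eq : z₀ ^ (1 - γ) / (1 - γ) + α * B ^ 2 = z₀ ^ (-γ) * (z₀ + B)) :
    (∀ y : ℝ, 0 < y → ∀ x : ℝ, -B ≤ x →
      f γ α x - y * x ≤
        f γ α (xstar2 γ (z₀ ^ (-γ)) B y) - y * xstar2 γ (z₀ ^ (-γ)) B y) ∧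
    (∀ x : ℝ, -B ≤ x →
      f γ α x - z₀ ^ (-γ) * x ≤ f γ α (-B) + z₀ ^ (-γ) * B) := by
  have h1γ : (0:ℝ) < 1 - γ := by linarith
  have hk2pos : (0:ℝ) < z₀ ^ (-γ) := Real.rpow_pos_of_pos hz₀ _
  have hanti := hfun_anti hγ0 hγ1 hB
  have hk2val := hfun_k2 hγ0 hγ1 hz₀ hz₀eq
  -- k₂ ≥ 2αB
  have hk2ge : 2 * α * B ≤ z₀ ^ (-γ) := by
    by_contra h
    push_neg at h
    have h2ab : (0:ℝ) < 2 * α * B := by positivity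
    have hstrict := hanti (Set.mem_Ioi.2 hk2pos) (Set.mem_Ioi.2 h2ab) h
    have hL := L1 (α := α) hγ0 hγ1 hα h2ab hk
    have hsq : (2 * α * B) ^ 2 / (4 * α) = α * B ^ 2 := by
      field_simp
      ring
    simp only [hk2val] at hstrict
    nlinarith [hL, hstrict]
  have hfB : f γ α (-B) = -(α * B ^ 2) := by
    rw [f, if_pos (by linarith : -B < (0:ℝ))]
    ring
  have main : ∀ y : ℝ, 0 < y → ∀ x : ℝ, -B ≤ x →
      f γ α x - y * x ≤
        f γ α (xstar2 γ (z₀ ^ (-γ)) B y) - y * xstar2 γ (z₀ ^ (-γ)) B y := by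
    intro y hy x hx
    by_cases hyk : y ≤ z₀ ^ (-γ)
    · simp only [xstar2, if_pos hyk]
      rw [Pval hγ0 hγ1 hy]
      -- hfun y ≥ hfun k₂ = -αB²
      have hge : -(α * B ^ 2) ≤ γ / (1 - γ) * y ^ ((γ - 1) / γ) - y * B := by
        rcases eq_or_lt_of_le hyk with he | hlt
        · rw [he]
          linarith [hk2val]
        · have := hanti (Set.mem_Ioi.2 hy) (Set.mem_Ioi.2 hk2pos) hlt
          simp only [hk2val] at this
          linarith
      rcases lt_or_ge x 0 with hx0 | hx0
      · rw [f, if_pos hx0]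
        rcases le_or_gt y (2 * α * B) with hy2 | hy2
        · have hq1 := quad1 (x := x) (y := y) hα
          have hL := L1 (α := α) hγ0 hγ1 hα hy (le_trans hy2 hk)
          linarith
        · have hq2 := quad2 hα hx hy2.le
          linarith
      · rw [f, if_neg (not_lt.2 hx0)]
        exact posbranch hγ0 hγ1 hx0 hy
    · push_neg at hyk
      simp only [xstar2, if_neg (not_le.2 hyk)]
      rw [hfB]
      rcases lt_or_ge x 0 with hx0 | hx0
      · rw [f, if_pos hx0]
        have := quad2 hα hx (by linarith : 2 * α * B ≤ y)
        linarith
      · rw [f, if_neg (not_lt.2 hx0)]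
        have hpb := posbranch hγ0 hγ1 hx0 hy
        have := hanti (Set.mem_Ioi.2 hk2pos) (Set.mem_Ioi.2 hy) hyk
        simp only [hk2val] at this
        linarith
  refine ⟨main, fun x hx => ?_⟩
  have h1 := main (z₀ ^ (-γ)) hk2pos x hx
  simp only [xstar2, if_pos (le_refl (z₀ ^ (-γ)))] at h1
  rw [Pval hγ0 hγ1 hk2pos] at h1
  rw [hfB]
  linarith [hk2val, h1]
end

section
/- There exists a unique z₀ ∈ (0,∞) satisfying z₀^{1-γ}/(1-γ) + αB² = z₀^{-γ}(z₀ + B). -/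
open Real Filter

theorem stmt2 (γ α B : ℝ) (hγ0 : 0 < γ) (hγ1 : γ < 1) (hα : 0 < α) (hB : 0 < B) :
    ∃! z₀ : ℝ, 0 < z₀ ∧
      z₀ ^ (1 - γ) / (1 - γ) + α * B ^ 2 = z₀ ^ (-γ) * (z₀ + B) := by
  have h1γ : 0 < 1 - γ := by linarith
  have hne : (1 - γ) ≠ 0 := ne_of_gt h1γ
  set c : ℝ := γ / (1 - γ) with hc
  have hcpos : 0 < c := div_pos hγ0 h1γ
  set h : ℝ → ℝ := fun z => c * z ^ (1 - γ) - B * z ^ (-γ) with hh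
  have key : ∀ z : ℝ, 0 < z →
      ((z ^ (1 - γ) / (1 - γ) + α * B ^ 2 = z ^ (-γ) * (z + B)) ↔ h z = -(α * B ^ 2)) := by
    intro z hz
    have e1 : z ^ (1 - γ) = z ^ (-γ) * z := by
      rw [show (1 - γ) = -γ + 1 by ring, Real.rpow_add hz, Real.rpow_one]
    simp only [hh, e1, hc]
    constructor <;> intro hE
    · field_simp at hE ⊢
      ring_nf at hE ⊢
      linarith
    · field_simp at hE ⊢
      ring_nf at hE ⊢
      linarith
  have hmono : StrictMonoOn h (Set.Ioi 0) := by
    intro x hx y hy hxy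
    simp only [Set.mem_Ioi] at hx hy
    have hA : x ^ (1 - γ) < y ^ (1 - γ) := Real.rpow_lt_rpow hx.le hxy h1γ
    have hgp : (0:ℝ) < x ^ γ := Real.rpow_pos_of_pos hx γ
    have hG : x ^ γ < y ^ γ := Real.rpow_lt_rpow hx.le hxy hγ0
    have hBq : y ^ (-γ) < x ^ (-γ) := by
      rw [Real.rpow_neg hx.le, Real.rpow_neg hy.le]
      exact inv_strictAnti₀ hgp hG
    simp only [hh]
    have h1 : c * x ^ (1 - γ) < c * y ^ (1 - γ) := mul_lt_mul_of_pos_left hA hcpos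
    have h2 : B * y ^ (-γ) < B * x ^ (-γ) := mul_lt_mul_of_pos_left hBq hB
    linarith
  -- behavior near 0+
  have t1 : Tendsto (fun z : ℝ => c * z ^ (1 - γ)) (nhdsWithin 0 (Set.Ioi 0)) (nhds 0) := by
    have h0 : Tendsto (fun z : ℝ => z ^ (1 - γ)) (nhds 0) (nhds 0) := by
      have := (Real.continuousAt_rpow_const 0 (1 - γ) (Or.inr h1γ.le))
      simpa [Real.zero_rpow hne] using this.tendsto
    have := (h0.const_mul c).mono_left
      (nhdsWithin_le_nhds : nhdsWithin (0:ℝ) (Set.Ioi 0) ≤ nhds 0)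
    simpa using this
  have t2 : Tendsto (fun z : ℝ => z ^ (-γ)) (nhdsWithin 0 (Set.Ioi 0)) atTop := by
    have hinv : Tendsto (fun z : ℝ => z⁻¹) (nhdsWithin 0 (Set.Ioi 0)) atTop :=
      tendsto_inv_nhdsGT_zero
    have := (tendsto_rpow_atTop hγ0).comp hinv
    apply this.congr'
    filter_upwards [self_mem_nhdsWithin] with z hz
    simp only [Set.mem_Ioi] at hz
    rw [Function.comp_apply, Real.inv_rpow hz.le, ← Real.rpow_neg hz.le]
  have tbot : Tendsto h (nhdsWithin 0 (Set.Ioi 0)) atBot := by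
    have hneg : Tendsto (fun z : ℝ => -(B * z ^ (-γ))) (nhdsWithin 0 (Set.Ioi 0)) atBot :=
      tendsto_neg_atTop_atBot.comp (t2.const_mul_atTop hB)
    have := t1.add_atBot hneg
    simpa [hh, sub_eq_add_neg] using this
  -- behavior at ∞
  have ttop : Tendsto h atTop atTop := by
    have h1 : Tendsto (fun z : ℝ => c * z ^ (1 - γ)) atTop atTop :=
      (tendsto_rpow_atTop h1γ).const_mul_atTop hcpos
    have h2 : Tendsto (fun z : ℝ => -(B * z ^ (-γ))) atTop (nhds (-(B * 0))) :=
      ((tendsto_rpow_neg_atTop hγ0).const_mul B).neg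
    have := h1.atTop_add (by simpa using h2)
    simpa [hh, sub_eq_add_neg] using this
  -- pick endpoints
  obtain ⟨a, ha1, ha2⟩ : ∃ a : ℝ, h a ≤ -(α * B ^ 2) ∧ a ∈ Set.Ioi (0:ℝ) :=
    ((tbot.eventually_le_atBot (-(α * B ^ 2))).and eventually_mem_nhdsWithin).exists
  have hapos : 0 < a := ha2
  obtain ⟨b, hb1, hb2⟩ : ∃ b : ℝ, -(α * B ^ 2) ≤ h b ∧ a ≤ b :=
    ((ttop.eventually_ge_atTop (-(α * B ^ 2))).and (eventually_ge_atTop a)).exists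
  -- continuity on [a, b]
  have hcont : ContinuousOn h (Set.Icc a b) := by
    have c1 : ContinuousOn (fun z : ℝ => z ^ (1 - γ)) (Set.Icc a b) :=
      ContinuousOn.rpow_const continuousOn_id fun x hx =>
        Or.inl (ne_of_gt (lt_of_lt_of_le hapos hx.1))
    have c2 : ContinuousOn (fun z : ℝ => z ^ (-γ)) (Set.Icc a b) :=
      ContinuousOn.rpow_const continuousOn_id fun x hx =>
        Or.inl (ne_of_gt (lt_of_lt_of_le hapos hx.1))
    exact (c1.const_smul c).sub (c2.const_smul B)
  have hmem : -(α * B ^ 2) ∈ Set.Icc (h a) (h b) := ⟨ha1, hb1⟩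
  obtain ⟨z₀, hz₀mem, hz₀eq⟩ := intermediate_value_Icc hb2 hcont hmem
  have hz₀pos : 0 < z₀ := lt_of_lt_of_le hapos hz₀mem.1
  refine ⟨z₀, ⟨hz₀pos, (key z₀ hz₀pos).mpr hz₀eq⟩, ?_⟩
  rintro y ⟨hypos, hyeq⟩
  have hy : h y = -(α * B ^ 2) := (key y hypos).mp hyeq
  exact hmono.injOn (Set.mem_Ioi.mpr hypos) (Set.mem_Ioi.mpr hz₀pos) (hy.trans hz₀eq.symm)
end

section
/- Assume k₁ ≥ 2αB. Define f^c : [-B,∞) → ℝ by f^c(x) = k₂(x + B) - αB² for -B ≤ x ≤ z₀ and f^c(x) = x^{1-γ}/(1-γ) for x > z₀. Then f^c is concave on [-B,∞), f^c(x) ≥ f(x) for all x ∈ [-B,∞), f^c(-B) = f(-B), f^c(x) = f(x) for all x ≥ z₀, and for every concave function h : [-B,∞) → ℝ with h ≥ f on [-B,∞) one has h ≥ f^c on [-B,∞); i.e. f^c is the concave envelope of f on [-B,∞). -/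
open Real

/-- The concave envelope of `f` on `[-B, ∞)` in the case `k₁ ≥ 2αB`, where `k₂ = z₀^{-γ}`:
`f^c(x) = k₂(x + B) - αB²` for `-B ≤ x ≤ z₀` and `f^c(x) = x^{1-γ}/(1-γ)` for `x > z₀`. -/
noncomputable def fc2 (γ α B z₀ x : ℝ) : ℝ :=
  if x ≤ z₀ then z₀ ^ (-γ) * (x + B) - α * B ^ 2 else x ^ (1 - γ) / (1 - γ)

/-- `k₂ = z₀^{-γ} ≥ 2αB` under the standing assumptions. -/
theorem k2_ge (γ α B z₀ : ℝ) (hγ0 : 0 < γ) (hγ1 : γ < 1) (hα : 0 < α) (hB : 0 < B)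
    (hk : 2 * α * B ≤ (4 * α * γ / (1 - γ)) ^ (γ / (1 + γ))) (hz₀ : 0 < z₀)
    (hz₀eq : z₀ ^ (1 - γ) / (1 - γ) + α * B ^ 2 = z₀ ^ (-γ) * (z₀ + B)) :
    2 * α * B ≤ z₀ ^ (-γ) := by
  have h1γ : (0:ℝ) < 1 - γ := by linarith
  have hγne : γ ≠ 0 := hγ0.ne'
  set u : ℝ := 2 * α * B with hu_def
  have hu : 0 < u := by positivity
  set z₁ : ℝ := u ^ (-1/γ) with hz₁_def
  have hz₁ : 0 < z₁ := rpow_pos_of_pos hu _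
  have hz₁γ : z₁ ^ (-γ) = u := by
    rw [hz₁_def, ← Real.rpow_mul hu.le]
    rw [show -1/γ * -γ = 1 by field_simp]
    exact rpow_one u
  have hz₁' : z₁ ^ (1-γ) = u ^ ((γ-1)/γ) := by
    rw [hz₁_def, ← Real.rpow_mul hu.le]
    congr 1; field_simp; ring
  have hk₁ : u ^ ((1+γ)/γ) ≤ 4 * α * γ / (1 - γ) := by
    have h := rpow_le_rpow hu.le hk (by positivity : (0:ℝ) ≤ (1+γ)/γ)
    rwa [← Real.rpow_mul (by positivity) , show γ/(1+γ) * ((1+γ)/γ) = 1 by field_simp,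
      rpow_one] at h
  have hpos : (0:ℝ) < u ^ ((γ-1)/γ) := rpow_pos_of_pos hu _
  have hstep : α * B ^ 2 ≤ γ/(1-γ) * u ^ ((γ-1)/γ) := by
    have h2 : u ^ ((1+γ)/γ) * u ^ ((γ-1)/γ) = u ^ (2:ℕ) := by
      rw [← Real.rpow_add hu, show (1+γ)/γ + (γ-1)/γ = ((2:ℕ):ℝ) by push_cast; field_simp; ring,
        Real.rpow_natCast]
    have h3 : u ^ ((1+γ)/γ) * u ^ ((γ-1)/γ) = 4 * α * (α * B^2) := by
      rw [h2, hu_def]; ring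
    have hk₁' : u ^ ((1+γ)/γ) * (1-γ) ≤ 4*α*γ := by
      rw [le_div_iff₀ h1γ] at hk₁; linarith
    rw [div_mul_eq_mul_div, le_div_iff₀ h1γ]
    nlinarith [mul_le_mul_of_nonneg_right hk₁' hpos.le]
  have hz₀z : z₀ ^ (-γ) * z₀ = z₀ ^ (1-γ) := by
    rw [show (1:ℝ)-γ = -γ+1 by ring, Real.rpow_add_one hz₀.ne']
  have hFz₀ : B * z₀ ^ (-γ) - γ/(1-γ) * z₀ ^ (1-γ) = α * B^2 := by
    have h4 : z₀ ^ (1-γ)/(1-γ) + α * B^2 = z₀^(1-γ) + z₀^(-γ) * B := by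
      rw [hz₀eq]; rw [mul_add, hz₀z]
    field_simp at h4 ⊢; linarith
  have hFz₁ : B * z₁ ^ (-γ) - γ/(1-γ) * z₁ ^ (1-γ) ≤ α * B^2 := by
    rw [hz₁γ, hz₁']
    have : B * u = 2 * (α * B^2) := by rw [hu_def]; ring
    linarith
  have hle : z₀ ≤ z₁ := by
    by_contra hlt
    push_neg at hlt
    have e1 : z₀ ^ (-γ) < z₁ ^ (-γ) := rpow_lt_rpow_of_neg hz₁ hlt (by linarith)
    have e2 : z₁ ^ (1-γ) < z₀ ^ (1-γ) := rpow_lt_rpow hz₁.le hlt h1γ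
    have c1 : B * z₀ ^ (-γ) < B * z₁ ^ (-γ) := by nlinarith
    have c2 : γ/(1-γ) * z₁ ^ (1-γ) < γ/(1-γ) * z₀ ^ (1-γ) := by
      apply mul_lt_mul_of_pos_left e2 (by positivity)
    linarith
  calc u = z₁ ^ (-γ) := hz₁γ.symm
    _ ≤ z₀ ^ (-γ) := rpow_le_rpow_of_nonpos hz₀ hle (by linarith)

/-- Tangent-line inequality on `[0, z₀]`. -/
theorem tangent (γ α B z₀ : ℝ) (hγ0 : 0 < γ) (hγ1 : γ < 1) (hz₀ : 0 < z₀)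
    (hz₀eq : z₀ ^ (1 - γ) / (1 - γ) + α * B ^ 2 = z₀ ^ (-γ) * (z₀ + B))
    {x : ℝ} (hx0 : 0 ≤ x) (hxz : x ≤ z₀) :
    x ^ (1 - γ) / (1 - γ) ≤ z₀ ^ (-γ) * (x + B) - α * B ^ 2 := by
  have h1γ : (0:ℝ) < 1 - γ := by linarith
  set φ : ℝ → ℝ := fun y => z₀ ^ (-γ) * (y + B) - α * B ^ 2 - y ^ (1 - γ) / (1 - γ) with hφ
  have hd : ∀ y ∈ Set.Ioo (0:ℝ) z₀, HasDerivAt φ (z₀ ^ (-γ) - y ^ (-γ)) y := by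
    intro y hy
    have h1 : HasDerivAt (fun y : ℝ => z₀ ^ (-γ) * (y + B) - α * B ^ 2) (z₀ ^ (-γ)) y := by
      simpa using (((hasDerivAt_id y).add_const B).const_mul (z₀ ^ (-γ))).sub_const (α * B ^ 2)
    have h2 : HasDerivAt (fun y : ℝ => y ^ (1 - γ) / (1 - γ)) (y ^ (-γ)) y := by
      have := (Real.hasDerivAt_rpow_const (p := 1 - γ) (Or.inl (ne_of_gt hy.1))).div_const (1 - γ)
      have e : (1 - γ) * y ^ (1 - γ - 1) / (1 - γ) = y ^ (-γ) := by
        rw [show (1:ℝ) - γ - 1 = -γ by ring]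
        field_simp
      rwa [e] at this
    exact h1.sub h2
  have hant : AntitoneOn φ (Set.Icc 0 z₀) := by
    apply antitoneOn_of_deriv_nonpos (convex_Icc 0 z₀)
    · apply ContinuousOn.sub
      · fun_prop
      · exact ((Real.continuous_rpow_const h1γ.le).div_const (1 - γ)).continuousOn
    · intro y hy
      rw [interior_Icc] at hy
      exact (hd y hy).differentiableAt.differentiableWithinAt
    · intro y hy
      rw [interior_Icc] at hy
      rw [(hd y hy).deriv]
      have : z₀ ^ (-γ) ≤ y ^ (-γ) := rpow_le_rpow_of_nonpos hy.1 hy.2.le (by linarith)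
      linarith
  have h0 : φ z₀ = 0 := by
    simp only [hφ]; linarith
  have := hant ⟨hx0, hxz⟩ ⟨le_refl 0 |>.trans hz₀.le, le_refl z₀⟩ hxz
  rw [h0] at this
  simp only [hφ] at this
  linarith

/-- `fc2` is differentiable everywhere, with piecewise derivative. -/
theorem fc2_hasDeriv (γ α B z₀ : ℝ) (hγ1 : γ < 1) (hz₀ : 0 < z₀)
    (hz₀eq : z₀ ^ (1 - γ) / (1 - γ) + α * B ^ 2 = z₀ ^ (-γ) * (z₀ + B)) (x : ℝ) :
    HasDerivAt (fc2 γ α B z₀) (if x ≤ z₀ then z₀ ^ (-γ) else x ^ (-γ)) x := by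
  have h1γ : (0:ℝ) < 1 - γ := by linarith
  have hL : ∀ y : ℝ, HasDerivAt (fun y : ℝ => z₀ ^ (-γ) * (y + B) - α * B ^ 2) (z₀ ^ (-γ)) y := by
    intro y
    simpa using (((hasDerivAt_id y).add_const B).const_mul (z₀ ^ (-γ))).sub_const (α * B ^ 2)
  have hG : ∀ y : ℝ, 0 < y → HasDerivAt (fun y : ℝ => y ^ (1 - γ) / (1 - γ)) (y ^ (-γ)) y := by
    intro y hy
    have := (Real.hasDerivAt_rpow_const (p := 1 - γ) (Or.inl (ne_of_gt hy))).div_const (1 - γ)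
    have e : (1 - γ) * y ^ (1 - γ - 1) / (1 - γ) = y ^ (-γ) := by
      rw [show (1:ℝ) - γ - 1 = -γ by ring]; field_simp
    rwa [e] at this
  rcases lt_trichotomy x z₀ with hx | hx | hx
  · rw [if_pos hx.le]
    apply (hL x).congr_of_eventuallyEq
    filter_upwards [Iio_mem_nhds hx] with y hy
    simp only [fc2]
    rw [if_pos (le_of_lt (Set.mem_Iio.mp hy))]
  · rw [hx, if_pos le_rfl]
    rw [hasDerivAt_iff_isLittleO]
    have hg := hasDerivAt_iff_isLittleO.mp (hG z₀ hz₀)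
    refine (Asymptotics.isBigO_of_le _ ?_).trans_isLittleO hg
    intro y
    by_cases hy : y ≤ z₀
    · simp only [fc2, if_pos hy, if_pos le_rfl, smul_eq_mul]
      have e0 : z₀ ^ (-γ) * (y + B) - α * B ^ 2 - (z₀ ^ (-γ) * (z₀ + B) - α * B ^ 2)
          - (y - z₀) * z₀ ^ (-γ) = 0 := by ring
      rw [e0]
      simp
    · push_neg at hy
      simp only [fc2, if_neg (not_le.mpr hy), if_pos le_rfl, smul_eq_mul]
      rw [show z₀ ^ (-γ) * (z₀ + B) - α * B ^ 2 = z₀ ^ (1-γ)/(1-γ) by linarith]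
  · rw [if_neg (not_le.mpr hx)]
    apply (hG x (hz₀.trans hx)).congr_of_eventuallyEq
    filter_upwards [Ioi_mem_nhds hx] with y hy
    simp [fc2, not_le.mpr (Set.mem_Ioi.mp hy)]

/-- Concavity of `fc2` on `[-B, ∞)`. -/
theorem fc2_concave (γ α B z₀ : ℝ) (hγ0 : 0 < γ) (hγ1 : γ < 1)
    (hz₀ : 0 < z₀)
    (hz₀eq : z₀ ^ (1 - γ) / (1 - γ) + α * B ^ 2 = z₀ ^ (-γ) * (z₀ + B)) :
    ConcaveOn ℝ (Set.Ici (-B)) (fc2 γ α B z₀) := by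
  have h1γ : (0:ℝ) < 1 - γ := by linarith
  have hd := fc2_hasDeriv γ α B z₀ hγ1 hz₀ hz₀eq
  apply AntitoneOn.concaveOn_of_deriv (convex_Ici _)
  · exact (Continuous.continuousOn (by
      apply Continuous.if_le
      · fun_prop
      · exact (Real.continuous_rpow_const h1γ.le).div_const (1 - γ)
      · exact continuous_id
      · exact continuous_const
      · intro y hy; subst hy; linarith))
  · exact fun y _ => (hd y).differentiableAt.differentiableWithinAt
  · rw [interior_Ici]
    intro a _ b _ hab
    rw [(hd a).deriv, (hd b).deriv]
    by_cases hbz : b ≤ z₀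
    · rw [if_pos (hab.trans hbz), if_pos hbz]
    · push_neg at hbz
      rw [if_neg (not_le.mpr hbz)]
      by_cases haz : a ≤ z₀
      · rw [if_pos haz]
        exact rpow_le_rpow_of_nonpos hz₀ hbz.le (by linarith)
      · push_neg at haz
        rw [if_neg (not_le.mpr haz)]
        exact rpow_le_rpow_of_nonpos (hz₀.trans haz) hab (by linarith)

theorem stmt5 (γ α B z₀ : ℝ) (hγ0 : 0 < γ) (hγ1 : γ < 1) (hα : 0 < α) (hB : 0 < B)
    (hk : 2 * α * B ≤ k₁ γ α) (hz₀ : 0 < z₀)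
    (hz₀eq : z₀ ^ (1 - γ) / (1 - γ) + α * B ^ 2 = z₀ ^ (-γ) * (z₀ + B)) :
    ConcaveOn ℝ (Set.Ici (-B)) (fc2 γ α B z₀) ∧
    (∀ x ∈ Set.Ici (-B), f γ α x ≤ fc2 γ α B z₀ x) ∧
    fc2 γ α B z₀ (-B) = f γ α (-B) ∧
    (∀ x : ℝ, z₀ ≤ x → fc2 γ α B z₀ x = f γ α x) ∧
    (∀ h : ℝ → ℝ, ConcaveOn ℝ (Set.Ici (-B)) h →
      (∀ x ∈ Set.Ici (-B), f γ α x ≤ h x) →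
      ∀ x ∈ Set.Ici (-B), fc2 γ α B z₀ x ≤ h x) := by
  have h1γ : (0:ℝ) < 1 - γ := by linarith
  have hk2 : 2 * α * B ≤ z₀ ^ (-γ) := k2_ge γ α B z₀ hγ0 hγ1 hα hB hk hz₀ hz₀eq
  have hfz₀ : f γ α z₀ = z₀ ^ (1 - γ) / (1 - γ) := by
    simp [f, not_lt.mpr hz₀.le]
  have hfc2z₀ : fc2 γ α B z₀ z₀ = z₀ ^ (1 - γ) / (1 - γ) := by
    simp only [fc2, if_pos le_rfl]; linarith
  have hfmB : f γ α (-B) = -(α * B ^ 2) := by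
    simp only [f, if_pos (by linarith : -B < (0:ℝ))]; ring
  refine ⟨fc2_concave γ α B z₀ hγ0 hγ1 hz₀ hz₀eq, ?_, ?_, ?_, ?_⟩
  · -- f ≤ fc2
    intro x hx
    have hxB : -B ≤ x := hx
    by_cases hxz : x ≤ z₀
    · simp only [fc2, if_pos hxz]
      by_cases hx0 : x < 0
      · simp only [f, if_pos hx0]
        nlinarith [mul_le_mul_of_nonneg_right hk2 (by linarith : (0:ℝ) ≤ x + B),
          mul_nonneg hα.le (sq_nonneg (x + B))]
      · push_neg at hx0
        simp only [f, if_neg (not_lt.mpr hx0)]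
        exact tangent γ α B z₀ hγ0 hγ1 hz₀ hz₀eq hx0 hxz
    · push_neg at hxz
      simp only [fc2, if_neg (not_le.mpr hxz), f,
        if_neg (not_lt.mpr (le_of_lt (hz₀.trans hxz)))]
      exact le_refl _
  · -- value at -B
    simp only [fc2, if_pos (by linarith : -B ≤ z₀), hfmB]
    ring
  · -- equality for x ≥ z₀
    intro x hx
    rcases eq_or_lt_of_le hx with hx | hx
    · rw [← hx, hfc2z₀, hfz₀]
    · simp only [fc2, if_neg (not_le.mpr hx), f, if_neg (not_lt.mpr (le_of_lt (hz₀.trans hx)))]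
  · -- envelope property
    intro h hconc hfh x hx
    have hxB : -B ≤ x := hx
    by_cases hxz : x ≤ z₀
    · simp only [fc2, if_pos hxz]
      have hz₀B : (0:ℝ) < z₀ + B := by linarith
      set a : ℝ := (z₀ - x) / (z₀ + B) with ha_def
      set b : ℝ := (x + B) / (z₀ + B) with hb_def
      have ha : 0 ≤ a := by
        apply div_nonneg (by linarith) hz₀B.le
      have hb : 0 ≤ b := by
        apply div_nonneg (by linarith) hz₀B.le
      have hab : a + b = 1 := by
        rw [ha_def, hb_def]; field_simp; ring
      have hmem1 : -B ∈ Set.Ici (-B) := Set.self_mem_Ici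
      have hmem2 : z₀ ∈ Set.Ici (-B) := by simp only [Set.mem_Ici]; linarith
      have hcomb := hconc.2 hmem1 hmem2 ha hb hab
      have hx1 : -(α * B ^ 2) ≤ h (-B) := by
        rw [← hfmB]; exact hfh (-B) hmem1
      have hx2 : z₀ ^ (1 - γ) / (1 - γ) ≤ h z₀ := by
        rw [← hfz₀]; exact hfh z₀ hmem2
      have he : a • (-B) + b • z₀ = x := by
        rw [ha_def, hb_def, smul_eq_mul, smul_eq_mul]; field_simp; ring
      rw [he] at hcomb
      have key : z₀ ^ (-γ) * (x + B) - α * B ^ 2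
          = a * (-(α * B ^ 2)) + b * (z₀ ^ (1 - γ) / (1 - γ)) := by
        have hLz₀ : z₀ ^ (1 - γ) / (1 - γ) = z₀ ^ (-γ) * (z₀ + B) - α * B ^ 2 := by linarith
        rw [hLz₀, ha_def, hb_def]
        field_simp
        ring
      rw [key]
      calc a * (-(α * B ^ 2)) + b * (z₀ ^ (1 - γ) / (1 - γ))
          ≤ a * h (-B) + b * h z₀ :=
            add_le_add (mul_le_mul_of_nonneg_left hx1 ha) (mul_le_mul_of_nonneg_left hx2 hb)
        _ ≤ h x := by simpa [smul_eq_mul] using hcomb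
    · push_neg at hxz
      have : fc2 γ α B z₀ x = f γ α x := by
        simp only [fc2, if_neg (not_le.mpr hxz), f,
          if_neg (not_lt.mpr (le_of_lt (hz₀.trans hxz)))]
      rw [this]
      exact hfh x hx
end

section
/- Assume k₁ < 2αB and let β > 0. Then ∫_ℝ [ (β e^t/(2α))² · 1_{{k₁ < β e^t ≤ 2αB}}(t) + B² · 1_{{β e^t > 2αB}}(t) ] dμ(t) = (β²/(4α²))·e^{2(M+V²)}·(Φ(Υ(2αB,β) - 2V) - Φ(Υ(k₁,β) - 2V)) + B²·(1 - Φ(Υ(2αB,β))). -/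
open Real MeasureTheory ProbabilityTheory

/-- The standard normal cumulative distribution function. -/
noncomputable def Phi (x : ℝ) : ℝ := ((gaussianReal 0 1) (Set.Iic x)).toReal

/-- `Υ(x, β) = (ln x - ln β - M)/V`. -/
noncomputable def Ups (M V x β : ℝ) : ℝ := (Real.log x - Real.log β - M) / V

lemma my_integral_gaussian_density (m : ℝ) {v : NNReal} (hv : v ≠ 0) (g : ℝ → ℝ) :
    ∫ t, g t ∂(gaussianReal m v) = ∫ t, gaussianPDFReal m v t * g t := by
  rw [gaussianReal_of_var_ne_zero m hv, gaussianPDF_def]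
  have h : (fun x => ENNReal.ofReal (gaussianPDFReal m v x))
      = fun x => ((gaussianPDFReal m v x).toNNReal : ENNReal) := rfl
  rw [h, integral_withDensity_eq_integral_smul (measurable_gaussianPDFReal m v).real_toNNReal]
  congr 1; ext x
  rw [NNReal.smul_def, smul_eq_mul, Real.coe_toNNReal _ (gaussianPDFReal_nonneg m v x)]

lemma my_gaussian_cdf (m x : ℝ) {V : ℝ} (hV : 0 < V) :
    ((gaussianReal m ⟨V ^ 2, sq_nonneg V⟩) (Set.Iic x)).toReal = Phi ((x - m) / V) := by
  have hmap : gaussianReal m ⟨V ^ 2, sq_nonneg V⟩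
      = (gaussianReal 0 1).map (fun y => V * y + m) := by
    rw [show (fun y : ℝ => V * y + m) = (· + m) ∘ (V * ·) from rfl,
      ← Measure.map_map (by fun_prop) (by fun_prop),
      gaussianReal_map_const_mul, gaussianReal_map_add_const]
    norm_num
    rfl
  rw [hmap, Measure.map_apply (by fun_prop) measurableSet_Iic]
  have hpre : (fun y : ℝ => V * y + m) ⁻¹' Set.Iic x = Set.Iic ((x - m) / V) := by
    ext y
    simp only [Set.mem_preimage, Set.mem_Iic]
    rw [le_div_iff₀ hV, mul_comm y V]
    constructor <;> intro <;> linarith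
  rw [hpre]; rfl

lemma my_pdf_shift (m : ℝ) {V : ℝ} (hV : 0 < V) (t : ℝ) :
    Real.exp (2 * t) * gaussianPDFReal m ⟨V ^ 2, sq_nonneg V⟩ t
      = Real.exp (2 * m + 2 * V ^ 2) * gaussianPDFReal (m + 2 * V ^ 2) ⟨V ^ 2, sq_nonneg V⟩ t := by
  simp only [gaussianPDFReal, NNReal.coe_mk]
  rw [mul_comm (Real.exp (2 * t)), mul_assoc, ← Real.exp_add, mul_left_comm, ← Real.exp_add]
  congr 2
  have hV2 : V ^ 2 ≠ 0 := by positivity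
  change -(t - m) ^ 2 / (2 * V ^ 2) + 2 * t = 2 * m + 2 * V ^ 2 + -(t - (m + 2 * V ^ 2)) ^ 2 / (2 * V ^ 2)
  field_simp
  ring

theorem stmt12 (γ α B M V β : ℝ) (hγ0 : 0 < γ) (hγ1 : γ < 1) (hα : 0 < α)
    (hB : 0 < B) (hV : 0 < V) (hβ : 0 < β) (hk : k₁ γ α < 2 * α * B) :
    ∫ t, ((β * Real.exp t / (2 * α)) ^ 2 *
        Set.indicator {s : ℝ | k₁ γ α < β * Real.exp s ∧ β * Real.exp s ≤ 2 * α * B}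
          (fun _ => (1 : ℝ)) t +
        B ^ 2 * Set.indicator {s : ℝ | 2 * α * B < β * Real.exp s}
          (fun _ => (1 : ℝ)) t)
        ∂(gaussianReal M ⟨V ^ 2, sq_nonneg V⟩) =
      β ^ 2 / (4 * α ^ 2) * Real.exp (2 * (M + V ^ 2)) *
        (Phi (Ups M V (2 * α * B) β - 2 * V) - Phi (Ups M V (k₁ γ α) β - 2 * V)) +
        B ^ 2 * (1 - Phi (Ups M V (2 * α * B) β)) := by
  have hv : (⟨V ^ 2, sq_nonneg V⟩ : NNReal) ≠ 0 := by
    intro h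
    have := congrArg NNReal.toReal h
    change V ^ 2 = 0 at this
    nlinarith
  set v : NNReal := ⟨V ^ 2, sq_nonneg V⟩ with hvdef
  have hbase : 0 < 4 * α * γ / (1 - γ) := div_pos (by positivity) (by linarith)
  have hk1 : 0 < k₁ γ α := Real.rpow_pos_of_pos hbase _
  have h2αB : 0 < 2 * α * B := by positivity
  set a := Real.log (k₁ γ α) - Real.log β with ha
  set b := Real.log (2 * α * B) - Real.log β with hb
  have hab : a < b := by
    have := Real.log_lt_log hk1 hk
    simp only [ha, hb]; linarith
  have hS1 : {s : ℝ | k₁ γ α < β * Real.exp s ∧ β * Real.exp s ≤ 2 * α * B} = Set.Ioc a b := by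
    ext s
    simp only [Set.mem_setOf_eq, Set.mem_Ioc]
    rw [← Real.exp_log hk1, ← Real.exp_log h2αB, ← Real.exp_log hβ]
    simp only [← Real.exp_add, Real.exp_lt_exp, Real.exp_le_exp]
    constructor <;> rintro ⟨h1, h2⟩ <;> constructor <;> linarith
  have hS2 : {s : ℝ | 2 * α * B < β * Real.exp s} = Set.Ioi b := by
    ext s
    simp only [Set.mem_setOf_eq, Set.mem_Ioi]
    rw [← Real.exp_log h2αB, ← Real.exp_log hβ]
    simp only [← Real.exp_add, Real.exp_lt_exp]
    constructor <;> intro <;> linarith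
  rw [hS1, hS2]
  have hintg : (fun t => (β * Real.exp t / (2 * α)) ^ 2 *
        (Set.Ioc a b).indicator (fun _ => (1 : ℝ)) t +
        B ^ 2 * (Set.Ioi b).indicator (fun _ => (1 : ℝ)) t)
      = fun t => (Set.Ioc a b).indicator (fun t => β ^ 2 / (4 * α ^ 2) * Real.exp (2 * t)) t +
        (Set.Ioi b).indicator (fun _ => B ^ 2) t := by
    ext t
    have he : Real.exp (2 * t) = Real.exp t ^ 2 := by rw [two_mul, Real.exp_add, sq]
    have e1 : (β * Real.exp t / (2 * α)) ^ 2 * (Set.Ioc a b).indicator (fun _ => (1 : ℝ)) t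
        = (Set.Ioc a b).indicator (fun t => β ^ 2 / (4 * α ^ 2) * Real.exp (2 * t)) t := by
      by_cases h1 : t ∈ Set.Ioc a b
      · rw [Set.indicator_of_mem h1, Set.indicator_of_mem h1, mul_one, he]
        field_simp; ring
      · rw [Set.indicator_of_notMem h1, Set.indicator_of_notMem h1, mul_zero]
    have e2 : B ^ 2 * (Set.Ioi b).indicator (fun _ => (1 : ℝ)) t
        = (Set.Ioi b).indicator (fun _ => B ^ 2) t := by
      by_cases h2 : t ∈ Set.Ioi b
      · rw [Set.indicator_of_mem h2, Set.indicator_of_mem h2, mul_one]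
      · rw [Set.indicator_of_notMem h2, Set.indicator_of_notMem h2, mul_zero]
    rw [e1, e2]
  rw [hintg]
  have hi1 : Integrable ((Set.Ioc a b).indicator fun t => β ^ 2 / (4 * α ^ 2) * Real.exp (2 * t))
      (gaussianReal M v) := by
    refine (IntegrableOn.integrable_indicator ?_ measurableSet_Ioc)
    exact (Continuous.integrableOn_Ioc (by fun_prop))
  have hi2 : Integrable ((Set.Ioi b).indicator fun _ => B ^ 2) (gaussianReal M v) :=
    (integrable_const _).indicator measurableSet_Ioi
  rw [integral_add hi1 hi2, integral_indicator_const _ measurableSet_Ioi, measureReal_def]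
  -- second term
  have hIoi : ((gaussianReal M v) (Set.Ioi b)).toReal = 1 - Phi (Ups M V (2 * α * B) β) := by
    rw [← Set.compl_Iic, prob_compl_eq_one_sub measurableSet_Iic,
      ENNReal.toReal_sub_of_le prob_le_one ENNReal.one_ne_top, ENNReal.toReal_one,
      hvdef, my_gaussian_cdf M b hV]
    simp [Ups, hb]
  -- first term
  have hfun : (fun t => gaussianPDFReal M v t *
        (Set.Ioc a b).indicator (fun t => β ^ 2 / (4 * α ^ 2) * Real.exp (2 * t)) t)
      = fun t => (β ^ 2 / (4 * α ^ 2) * Real.exp (2 * M + 2 * V ^ 2)) *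
        (gaussianPDFReal (M + 2 * V ^ 2) v t * (Set.Ioc a b).indicator (fun _ => (1 : ℝ)) t) := by
    ext t
    by_cases ht : t ∈ Set.Ioc a b
    · simp only [Set.indicator_of_mem ht]
      have h := my_pdf_shift M hV t
      rw [hvdef]
      linear_combination β ^ 2 / (4 * α ^ 2) * h
    · simp [Set.indicator_of_notMem ht]
  rw [my_integral_gaussian_density M hv, hfun, integral_const_mul _ _,
    ← my_integral_gaussian_density (M + 2 * V ^ 2) hv]
  have hind : ∫ t, (Set.Ioc a b).indicator (fun _ => (1 : ℝ)) t ∂(gaussianReal (M + 2 * V ^ 2) v)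
      = ((gaussianReal (M + 2 * V ^ 2) v) (Set.Ioc a b)).toReal :=
    integral_indicator_one measurableSet_Ioc
  rw [hind]
  have hIoc : ((gaussianReal (M + 2 * V ^ 2) v) (Set.Ioc a b)).toReal
      = Phi (Ups M V (2 * α * B) β - 2 * V) - Phi (Ups M V (k₁ γ α) β - 2 * V) := by
    rw [← Set.Iic_sdiff_Iic, measure_diff (Set.Iic_subset_Iic.mpr hab.le)
      measurableSet_Iic.nullMeasurableSet (measure_ne_top _ _),
      ENNReal.toReal_sub_of_le (measure_mono (Set.Iic_subset_Iic.mpr hab.le)) (measure_ne_top _ _),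
      hvdef, my_gaussian_cdf _ _ hV, my_gaussian_cdf _ _ hV]
    have e1 : (b - (M + 2 * V ^ 2)) / V = Ups M V (2 * α * B) β - 2 * V := by
      simp only [Ups, hb]; field_simp; ring
    have e2 : (a - (M + 2 * V ^ 2)) / V = Ups M V (k₁ γ α) β - 2 * V := by
      simp only [Ups, ha]; field_simp; ring
    rw [e1, e2]
  rw [hIoc, hIoi]
  have hexp : Real.exp (2 * M + 2 * V ^ 2) = Real.exp (2 * (M + V ^ 2)) := by ring_nf
  rw [hexp, smul_eq_mul]
  ring
end

section
/- Assume k₁ < 2αB. Define x* : (0,∞) → ℝ by x*(y) = y^{-1/γ} for 0 < y ≤ k₁, x*(y) = -y/(2α) for k₁ < y ≤ 2αB, and x*(y) = -B for y > 2αB. Then x* is nonincreasing on (0,∞), the map y ↦ y·x*(y) is strictly decreasing on (0,∞), lim_{y→0+} y·x*(y) = +∞, and lim_{y→∞} y·x*(y) = -∞. -/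
open Real Filter

theorem stmt19 (γ α B : ℝ) (hγ0 : 0 < γ) (hγ1 : γ < 1) (hα : 0 < α) (hB : 0 < B)
    (hk : k₁ γ α < 2 * α * B) :
    AntitoneOn (xstar γ α B) (Set.Ioi 0) ∧
    StrictAntiOn (fun y => y * xstar γ α B y) (Set.Ioi 0) ∧
    Tendsto (fun y => y * xstar γ α B y) (nhdsWithin 0 (Set.Ioi 0)) atTop ∧
    Tendsto (fun y => y * xstar γ α B y) atTop atBot := by
  have hkpos : 0 < k₁ γ α := by
    apply rpow_pos_of_pos
    have h1γ : 0 < 1 - γ := by linarith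
    positivity
  have hexp : -(1 / γ) < 0 := by
    have : 0 < 1 / γ := by positivity
    linarith
  -- sign facts
  have hx_pos : ∀ y : ℝ, 0 < y → y ≤ k₁ γ α → 0 < xstar γ α B y := by
    intro y hy hyk
    rw [xstar, if_pos hyk]
    exact rpow_pos_of_pos hy _
  have hx_neg : ∀ y : ℝ, k₁ γ α < y → xstar γ α B y < 0 := by
    intro y hyk
    rw [xstar, if_neg (not_le.mpr hyk)]
    split
    · have : 0 < y := hkpos.trans hyk
      apply div_neg_of_neg_of_pos <;> [linarith; linarith]
    · linarith
  refine ⟨?_, ?_, ?_, ?_⟩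
  · -- AntitoneOn
    intro a ha b hb hab
    simp only [Set.mem_Ioi] at ha hb
    rcases le_or_gt b (k₁ γ α) with hbk | hbk
    · have hak : a ≤ k₁ γ α := hab.trans hbk
      rw [xstar, if_pos hbk, xstar, if_pos hak]
      exact rpow_le_rpow_of_nonpos ha hab hexp.le
    · rcases le_or_gt a (k₁ γ α) with hak | hak
      · exact (hx_neg b hbk).le.trans (hx_pos a ha hak).le
      · rw [xstar, if_neg (not_le.mpr hbk), xstar, if_neg (not_le.mpr hak)]
        rcases le_or_gt b (2 * α * B) with hb2 | hb2
        · have ha2 : a ≤ 2 * α * B := hab.trans hb2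
          rw [if_pos hb2, if_pos ha2]
          apply div_le_div_of_nonneg_right (by linarith) (by linarith) |>.trans_eq rfl
        · rw [if_neg (not_le.mpr hb2)]
          rcases le_or_gt a (2 * α * B) with ha2 | ha2
          · rw [if_pos ha2, le_div_iff₀ (by linarith : (0:ℝ) < 2 * α)]
            nlinarith
          · rw [if_neg (not_le.mpr ha2)]
  · -- StrictAntiOn of f y = y * xstar y
    intro a ha b hb hab
    simp only [Set.mem_Ioi] at ha hb
    rcases le_or_gt b (k₁ γ α) with hbk | hbk
    · have hak : a ≤ k₁ γ α := hab.le.trans hbk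
      simp only [xstar, if_pos hbk, if_pos hak]
      have h1 : ∀ y : ℝ, 0 < y → y * y ^ (-(1 / γ)) = y ^ (1 + -(1 / γ)) := by
        intro y hy
        rw [rpow_add hy, rpow_one]
      rw [h1 a ha, h1 b (ha.trans hab)]
      have : 1 + -(1 / γ) < 0 := by
        have : 1 < 1 / γ := by
          rw [lt_div_iff₀ hγ0]; linarith
        linarith
      exact rpow_lt_rpow_of_neg ha hab this
    · rcases le_or_gt a (k₁ γ α) with hak | hak
      · have h1 : b * xstar γ α B b < 0 := mul_neg_of_pos_of_neg (ha.trans hab) (hx_neg b hbk)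
        have h2 : 0 < a * xstar γ α B a := mul_pos ha (hx_pos a ha hak)
        simpa using h1.trans h2
      · simp only [xstar, if_neg (not_le.mpr hbk), if_neg (not_le.mpr hak)]
        rcases le_or_gt b (2 * α * B) with hb2 | hb2
        · have ha2 : a ≤ 2 * α * B := hab.le.trans hb2
          rw [if_pos hb2, if_pos ha2]
          rw [mul_div_assoc', mul_div_assoc', div_lt_div_iff₀ (by linarith) (by linarith)]
          nlinarith [mul_pos (mul_pos (sub_pos.mpr hab) (by linarith : (0:ℝ) < a + b)) hα]
        · rw [if_neg (not_le.mpr hb2)]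
          rcases le_or_gt a (2 * α * B) with ha2 | ha2
          · rw [if_pos ha2]
            rw [mul_div_assoc', lt_div_iff₀ (by linarith : (0:ℝ) < 2 * α)]
            nlinarith [mul_pos ha (hkpos.trans hak)]
          · rw [if_neg (not_le.mpr ha2)]
            nlinarith
  · -- limit at 0+
    have key : Tendsto (fun y : ℝ => y ^ (1 + -(1 / γ))) (nhdsWithin 0 (Set.Ioi 0)) atTop := by
      have hc : 0 < -(1 + -(1 / γ)) := by
        have : 1 < 1 / γ := by rw [lt_div_iff₀ hγ0]; linarith
        linarith
      have := (tendsto_rpow_atTop hc).comp tendsto_inv_nhdsGT_zero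
      apply this.congr'
      filter_upwards [self_mem_nhdsWithin] with y hy
      simp only [Function.comp]
      rw [inv_rpow (le_of_lt hy), ← rpow_neg (le_of_lt hy), neg_neg]
    apply key.congr'
    filter_upwards [Ioo_mem_nhdsGT_of_mem (Set.left_mem_Ico.mpr hkpos)] with y hy
    obtain ⟨hy0, hyk⟩ := hy
    rw [xstar, if_pos hyk.le, rpow_add hy0, rpow_one]
  · -- limit at atTop
    have key : Tendsto (fun y : ℝ => -(B * y)) atTop atBot :=
      tendsto_neg_atTop_atBot.comp (tendsto_id.const_mul_atTop hB)
    apply key.congr'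
    filter_upwards [eventually_gt_atTop (2 * α * B)] with y hy
    rw [xstar, if_neg (not_le.mpr (hk.trans hy)), if_neg (not_le.mpr hy)]
    ring
end
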